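/- Let S ≥ 1 and define v: ℝ^S → ℝ^{2^S} by v(x) := ⊗_{n=1}^{S} (cos(πx_n), sin(πx_n)). Then: (i) for all x, y ∈ ℝ^S, ⟨v(x), v(y)⟩ = ∏_{n=1}^{S} cos(π(x_n − y_n)); and (ii) if x and y are independent random vectors, each with coordinates independent and uniformly distributed on [−1,1], then E[⟨v(x), v(y)⟩²] = 2^{−S}. -/

import Mathlib

/-!
Both coefficient vectors are tensor products, so their inner product factors coordinatewise into
`cos · cos + sin · sin = cos` of the difference. After squaring, Fubini turns the second moment
into a product of `S` averages of `cos² (π (a - t))` over `t ∈ [-1, 1]`, a full period, each of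
which equals `1/2`.
-/

open MeasureTheory Real

/-- The vector `v(x) = ⊗_{n=1}^{S} (cos(πx_n), sin(πx_n)) ∈ ℝ^{2^S}` of Pauli expansion
coefficients of the qubit-embedding state of `x` (the index set of `ℝ^{2^S}` is realized
as `Fin S → Fin 2`). -/
noncomputable def embedCoeff (S : ℕ) (x : Fin S → ℝ) : (Fin S → Fin 2) → ℝ :=
  fun b => ∏ n : Fin S, (if b n = 0 then Real.cos (π * x n) else Real.sin (π * x n))

/-- The uniform probability measure on `[−1,1]`. -/
noncomputable def uniformPM11 : Measure ℝ :=
  (2 : ENNReal)⁻¹ • (volume.restrict (Set.Icc (-1 : ℝ) 1))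

theorem sum_embedCoeff_mul_embedCoeff (S : ℕ) (x y : Fin S → ℝ) :
    ∑ b : Fin S → Fin 2, embedCoeff S x b * embedCoeff S y b
      = ∏ n : Fin S, cos (π * (x n - y n)) := by
  simp_rw [embedCoeff, ← Finset.prod_mul_distrib]
  rw [← Fintype.prod_sum fun n (j : Fin 2) =>
    (if j = 0 then cos (π * x n) else sin (π * x n)) *
      (if j = 0 then cos (π * y n) else sin (π * y n))]
  refine Finset.prod_congr rfl fun n _ => ?_
  simp [Fin.sum_univ_two, mul_sub, cos_sub]

instance : IsProbabilityMeasure uniformPM11 :=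
  ⟨by simp [uniformPM11, Real.volume_Icc, one_add_one_eq_two, ENNReal.inv_mul_cancel]⟩

theorem integral_uniformPM11 (f : ℝ → ℝ) :
    ∫ t, f t ∂uniformPM11 = 2⁻¹ * ∫ t in (-1 : ℝ)..1, f t := by
  rw [uniformPM11, integral_smul_measure, integral_Icc_eq_integral_Ioc,
    ← intervalIntegral.integral_of_le (by norm_num : (-1 : ℝ) ≤ 1)]
  simp

theorem intervalIntegral_cos_sq_pi_mul_sub (a : ℝ) :
    ∫ t in (-1 : ℝ)..1, cos (π * (a - t)) ^ 2 = 1 := by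
  simp only [mul_sub]
  rw [intervalIntegral.integral_comp_sub_mul (fun u => cos u ^ 2) pi_ne_zero, integral_cos_sq,
    show π * a - π * -1 = π * a - π + 2 * π by ring, cos_add_two_pi, sin_add_two_pi, smul_eq_mul]
  field_simp [pi_ne_zero]
  ring

theorem integral_cos_sq_pi_mul_sub_uniformPM11 (a : ℝ) :
    ∫ t, cos (π * (a - t)) ^ 2 ∂uniformPM11 = 2⁻¹ := by
  rw [integral_uniformPM11, intervalIntegral_cos_sq_pi_mul_sub, mul_one]

section Product

variable {ι : Type*} [Fintype ι]

theorem integral_prod_cos_sq_pi_mul_sub (x : ι → ℝ) :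
    ∫ y, (∏ n, cos (π * (x n - y n))) ^ 2 ∂(Measure.pi fun _ => uniformPM11)
      = ((2 : ℝ) ^ Fintype.card ι)⁻¹ := by
  simp_rw [← Finset.prod_pow]
  rw [integral_fintype_prod_eq_prod (fun n t => cos (π * (x n - t)) ^ 2)]
  simp [integral_cos_sq_pi_mul_sub_uniformPM11]

theorem integrable_prod_cos_sq_pi_mul_sub (μ : Measure ((ι → ℝ) × (ι → ℝ))) [IsFiniteMeasure μ] :
    Integrable (fun p => (∏ n, cos (π * (p.1 n - p.2 n))) ^ 2) μ := by
  refine .of_bound (by fun_prop) 1 (.of_forall fun p => ?_)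
  rw [norm_pow]
  refine pow_le_one₀ (norm_nonneg _) ((Finset.norm_prod_le _ _).trans ?_)
  exact Finset.prod_le_one (fun _ _ => norm_nonneg _) fun _ _ => abs_cos_le_one _

end Product

theorem embedCoeff_inner_and_second_moment_general (S : ℕ) :
    (∀ x y : Fin S → ℝ,
        (∑ b : Fin S → Fin 2, embedCoeff S x b * embedCoeff S y b)
          = ∏ n : Fin S, Real.cos (π * (x n - y n)))
    ∧ (∫ p : (Fin S → ℝ) × (Fin S → ℝ),
          (∑ b : Fin S → Fin 2, embedCoeff S p.1 b * embedCoeff S p.2 b) ^ 2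
          ∂((Measure.pi fun _ : Fin S => uniformPM11).prod
              (Measure.pi fun _ : Fin S => uniformPM11)))
        = ((2 : ℝ) ^ S)⁻¹ := by
  refine ⟨sum_embedCoeff_mul_embedCoeff S, ?_⟩
  simp_rw [sum_embedCoeff_mul_embedCoeff]
  rw [integral_prod _ (integrable_prod_cos_sq_pi_mul_sub _)]
  simp [integral_prod_cos_sq_pi_mul_sub]

/-- **Overlap of qubit-embedding coefficient vectors.**
(i) `⟨v(x), v(y)⟩ = ∏_n cos(π(x_n − y_n))` for all `x, y ∈ ℝ^S`; (ii) for independent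
`x, y` with coordinates independent and uniform on `[−1,1]`,
`E[⟨v(x), v(y)⟩²] = 2^{−S}`. -/
theorem embedCoeff_inner_and_second_moment (S : ℕ) (hS : 1 ≤ S) :
    (∀ x y : Fin S → ℝ,
        (∑ b : Fin S → Fin 2, embedCoeff S x b * embedCoeff S y b)
          = ∏ n : Fin S, Real.cos (π * (x n - y n)))
    ∧ (∫ p : (Fin S → ℝ) × (Fin S → ℝ),
          (∑ b : Fin S → Fin 2, embedCoeff S p.1 b * embedCoeff S p.2 b) ^ 2
          ∂((Measure.pi fun _ : Fin S => uniformPM11).prod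
              (Measure.pi fun _ : Fin S => uniformPM11)))
        = ((2 : ℝ) ^ S)⁻¹ :=
  embedCoeff_inner_and_second_moment_general S
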